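/- Let N be a level-k binary tree-child network with k ≥ 2, and let x, y be leaves such that N contains a cherry on {x,y} (x and y have a common parent). Then every MLLS of N contains the cherry on {x,y}. Conversely, if every MLLS of N contains a cherry on {x,y}, then N contains a cherry on {x,y}. -/

import Mathlib

open scoped Classical
noncomputable section

/-- A (rooted binary phylogenetic) network datum: a finite directed graph on `ℕ`
with an optional leaf-labelling by `α`. -/
structure Net (α : Type) where
  verts : Finset ℕ
  edges : Finset (ℕ × ℕ)
  lab : ℕ → Option α

namespace Net

variable {α β : Type}

def Edge (N : Net α) (u v : ℕ) : Prop := (u, v) ∈ N.edges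

def indeg (N : Net α) (v : ℕ) : ℕ := (N.edges.filter fun e => e.2 = v).card
def outdeg (N : Net α) (v : ℕ) : ℕ := (N.edges.filter fun e => e.1 = v).card

/-- Reachability by directed paths. -/
def Reaches (N : Net α) : ℕ → ℕ → Prop := Relation.ReflTransGen N.Edge

def IsRoot (N : Net α) (v : ℕ) : Prop :=
  v ∈ N.verts ∧ N.indeg v = 0 ∧ N.outdeg v = 1
def IsLeaf (N : Net α) (v : ℕ) : Prop :=
  v ∈ N.verts ∧ N.indeg v = 1 ∧ N.outdeg v = 0
def IsTreeNode (N : Net α) (v : ℕ) : Prop :=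
  v ∈ N.verts ∧ N.indeg v = 1 ∧ N.outdeg v = 2
def IsRetic (N : Net α) (v : ℕ) : Prop :=
  v ∈ N.verts ∧ N.indeg v = 2 ∧ N.outdeg v = 1

/-- `N` is a rooted binary phylogenetic network on leaf set `α`. -/
def IsNetwork (N : Net α) : Prop :=
  (∀ e ∈ N.edges, e.1 ∈ N.verts ∧ e.2 ∈ N.verts) ∧
  (∀ u v, N.Edge u v → ¬ N.Reaches v u) ∧
  (∃! r, N.IsRoot r) ∧
  (∀ v ∈ N.verts, N.IsRoot v ∨ N.IsLeaf v ∨ N.IsTreeNode v ∨ N.IsRetic v) ∧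
  (∀ v, (∃ x, N.lab v = some x) ↔ N.IsLeaf v) ∧
  (∀ x : α, ∃! v, N.lab v = some x)

/-- Tree-child: every non-leaf node has a child that is a tree node or a leaf. -/
def TreeChild (N : Net α) : Prop :=
  N.IsNetwork ∧
  ∀ v ∈ N.verts, ¬ N.IsLeaf v → ∃ c, N.Edge v c ∧ (N.IsTreeNode c ∨ N.IsLeaf c)

def IsReticEdge (N : Net α) (e : ℕ × ℕ) : Prop := e ∈ N.edges ∧ N.IsRetic e.2

def deleteNode (N : Net α) (v : ℕ) : Net α :=
  ⟨N.verts.erase v, N.edges.filter fun e => e.1 ≠ v ∧ e.2 ≠ v, N.lab⟩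

def deleteEdge (N : Net α) (e : ℕ × ℕ) : Net α := ⟨N.verts, N.edges.erase e, N.lab⟩

def deleteEdges (N : Net α) (E : Finset (ℕ × ℕ)) : Net α := ⟨N.verts, N.edges \ E, N.lab⟩

/-- One step of cleaning up: delete an unlabelled outdegree-0 node, or suppress an
indegree-1 outdegree-1 node.  (In this simple-digraph encoding the parallel-edge rule
is subsumed: the inserted edge merges with an existing one, and the endpoints are then
suppressed by further steps.) -/
inductive CleanStep {α : Type} : Net α → Net α → Prop
  | delNode (N : Net α) (v : ℕ) (hv : v ∈ N.verts) (h0 : N.outdeg v = 0)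
      (hlab : N.lab v = none) : CleanStep N (N.deleteNode v)
  | suppress (N : Net α) (u v w : ℕ) (h1 : N.indeg v = 1) (h2 : N.outdeg v = 1)
      (hu : N.Edge u v) (hw : N.Edge v w) :
      CleanStep N ⟨N.verts.erase v,
        insert (u, w) (N.edges.filter fun e => e.1 ≠ v ∧ e.2 ≠ v), N.lab⟩

/-- `N` cleans up to `M`: apply clean-up steps until none applies. -/
def CleansTo (N M : Net α) : Prop :=
  Relation.ReflTransGen CleanStep N M ∧ ∀ M', ¬ CleanStep M M'

/-- Maximum subnetwork: delete one reticulation edge and clean up. -/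
def IsMaxSubnet (N M : Net α) : Prop :=
  ∃ e, N.IsReticEdge e ∧ CleansTo (N.deleteEdge e) M

/-- A reticulation edge is valid if deleting it and cleaning up removes exactly
2 nodes and 3 edges. -/
def ValidEdge (N : Net α) (e : ℕ × ℕ) : Prop :=
  N.IsReticEdge e ∧
  ∀ M, CleansTo (N.deleteEdge e) M →
    M.verts.card + 2 = N.verts.card ∧ M.edges.card + 3 = N.edges.card

/-- A valid network: all reticulation edges are valid. -/
def Valid (N : Net α) : Prop :=
  N.IsNetwork ∧ ∀ e, N.IsReticEdge e → N.ValidEdge e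

def Subgraph (M N : Net α) : Prop :=
  M.verts ⊆ N.verts ∧ M.edges ⊆ N.edges ∧ ∀ v ∈ M.verts, M.lab v = N.lab v

/-- One edge-subdivision step. -/
inductive SubdivStep {α : Type} : Net α → Net α → Prop
  | mk (N : Net α) (u v w : ℕ) (he : N.Edge u v) (hw : w ∉ N.verts) :
      SubdivStep N ⟨insert w N.verts,
        insert (u, w) (insert (w, v) (N.edges.erase (u, v))), N.lab⟩

/-- `M` is a subdivision of `N`. -/
def Subdivision (N M : Net α) : Prop := Relation.ReflTransGen SubdivStep N M

/-- Isomorphism of networks (preserving leaf labels). -/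
def Iso (N M : Net α) : Prop :=
  ∃ f : ℕ → ℕ, Set.BijOn f ↑N.verts ↑M.verts ∧
    (∀ u ∈ N.verts, ∀ v ∈ N.verts, (N.Edge u v ↔ M.Edge (f u) (f v))) ∧
    ∀ v ∈ N.verts, N.lab v = M.lab (f v)

/-- `N` displays `M`: some subgraph of `N` is (isomorphic to) a subdivision of `M`. -/
def Displays (N M : Net α) : Prop :=
  ∃ S M', Subgraph S N ∧ Subdivision M M' ∧ Iso M' S

/-- Leaf-descendant (label) set of a node. -/
def descSet (N : Net α) (v : ℕ) : Set α :=
  {x | ∃ l, N.lab l = some x ∧ N.Reaches v l}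

def Adj (N : Net α) (u v : ℕ) : Prop := N.Edge u v ∨ N.Edge v u

def ConnectedIn (N : Net α) (S : Finset ℕ) (u v : ℕ) : Prop :=
  Relation.ReflTransGen (fun a b => a ∈ S ∧ b ∈ S ∧ N.Adj a b) u v

/-- A biconnected vertex set: at least 3 nodes, connected, and no cut-node. -/
def BiconnectedSet (N : Net α) (S : Finset ℕ) : Prop :=
  3 ≤ S.card ∧ S ⊆ N.verts ∧
  (∀ u ∈ S, ∀ v ∈ S, N.ConnectedIn S u v) ∧
  ∀ c ∈ S, ∀ u ∈ S.erase c, ∀ v ∈ S.erase c, N.ConnectedIn (S.erase c) u v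

/-- A biconnected component: a maximal biconnected set. -/
def BlobSet (N : Net α) (S : Finset ℕ) : Prop :=
  N.BiconnectedSet S ∧ ∀ T, N.BiconnectedSet T → S ⊆ T → S = T

/-- A blob: either a biconnected component, or a tree node in no biconnected component. -/
def IsBlob (N : Net α) (S : Finset ℕ) : Prop :=
  N.BlobSet S ∨ ∃ t, S = {t} ∧ N.IsTreeNode t ∧ ∀ T, N.BlobSet T → t ∉ T

/-- The top node of a blob: the node of the blob from which all its nodes are reachable. -/
def TopNode (N : Net α) (S : Finset ℕ) (v : ℕ) : Prop :=
  v ∈ S ∧ ∀ u ∈ S, N.Reaches v u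

/-- The blob tree of `N` contains a blob node labelled `A`. -/
def HasBlobNode (N : Net α) (A : Set α) : Prop :=
  ∃ S v, N.IsBlob S ∧ N.TopNode S v ∧ N.descSet v = A

/-- The blob tree of `N` has an edge from blob node `A` to blob node `B`. -/
def BTEdge (N : Net α) (A B : Set α) : Prop :=
  ∃ S T u v, N.IsBlob S ∧ N.IsBlob T ∧ S ≠ T ∧ N.TopNode S u ∧ N.TopNode T v ∧
    N.descSet u = A ∧ N.descSet v = B ∧ ∃ w ∈ S, N.Edge w v

def reticCount (N : Net α) (S : Finset ℕ) : ℕ := (S.filter fun v => N.IsRetic v).card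

/-- `N` is a level-`k` network. -/
def IsLevel (N : Net α) (k : ℕ) : Prop :=
  (∀ S, N.BiconnectedSet S → N.reticCount S ≤ k) ∧
  (k = 0 ∨ ∃ S, N.BiconnectedSet S ∧ N.reticCount S = k)

/-- `M` is a maximum lower-level subnetwork (MLLS) of the level-`k` network `N`:
obtained by deleting exactly one valid reticulation edge from every level-`k`
biconnected component and cleaning up. -/
def IsMLLS (N : Net α) (k : ℕ) (M : Net α) : Prop :=
  ∃ E : Finset (ℕ × ℕ),
    (∀ e ∈ E, N.ValidEdge e) ∧
    (∀ S, N.BlobSet S → N.reticCount S = k → ∃! e, e ∈ E ∧ e.1 ∈ S ∧ e.2 ∈ S) ∧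
    (∀ e ∈ E, ∃ S, N.BlobSet S ∧ N.reticCount S = k ∧ e.1 ∈ S ∧ e.2 ∈ S) ∧
    CleansTo (N.deleteEdges E) M

/-- A cherry on two leaves. -/
def Cherry (N : Net α) (x y : ℕ) : Prop :=
  N.IsLeaf x ∧ N.IsLeaf y ∧ x ≠ y ∧ ∃ p, N.Edge p x ∧ N.Edge p y

/-- A reticulated cherry on two leaves, with the reticulation on `y`. -/
def RetCherry (N : Net α) (x y : ℕ) : Prop :=
  N.IsLeaf x ∧ N.IsLeaf y ∧
  ∃ p r, N.IsRetic r ∧ N.Edge r y ∧ N.Edge p x ∧ N.Edge p r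

/-- A reticulated cherry shape on non-reticulation nodes `x, y` with nodes
`px, py, gy` and edges `(px,x), (px,py), (gy,py), (py,y)`, `py` a reticulation. -/
def RetCherryShape (N : Net α) (x y px py gy : ℕ) : Prop :=
  ¬ N.IsRetic x ∧ ¬ N.IsRetic y ∧ N.IsRetic py ∧ px ≠ gy ∧
  N.Edge px x ∧ N.Edge px py ∧ N.Edge gy py ∧ N.Edge py y

def DirPath (N : Net α) (l : List ℕ) : Prop := l ≠ [] ∧ l.Chain' N.Edge

/-- `l` is the node sequence of an up-down path from `x` to `y`: a directed path from
an apex down to `x`, reversed, followed by a directed path from the apex down to `y`. -/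
def IsUpDownPath (N : Net α) (x y : ℕ) (l : List ℕ) : Prop :=
  ∃ p q : List ℕ, N.DirPath p ∧ N.DirPath q ∧ p.head? = q.head? ∧
    p.getLast? = some x ∧ q.getLast? = some y ∧ l = p.reverse ++ q.tail

/-- `n` is the shortest up-down distance between `x` and `y` (an up-down path with `n`
edges has `n+1` nodes). -/
def IsUpDownDist (N : Net α) (x y n : ℕ) : Prop :=
  (∃ l, N.IsUpDownPath x y l ∧ l.length = n + 1) ∧
  ∀ l, N.IsUpDownPath x y l → n + 1 ≤ l.length

def relabel (N : Net α) (f : α → β) : Net β :=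
  ⟨N.verts, N.edges, fun v => (N.lab v).map f⟩

/-- Collapse the pendant subnetwork rooted at `y` to a single leaf labelled `A`. -/
def collapseAt (N : Net α) (y : ℕ) (A : α) : Net α :=
  ⟨N.verts.filter (fun v => v = y ∨ ¬ N.Reaches y v),
   N.edges.filter (fun e => ¬ N.Reaches y e.1),
   fun v => if v = y then some A else N.lab v⟩

/-- Leaf-descendant set for networks whose leaves are labelled by sets of taxa. -/
def descUnion (N : Net (Set α)) (v : ℕ) : Set α :=
  {x | ∃ l s, N.lab l = some s ∧ x ∈ s ∧ N.Reaches v l}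

def HasBlobNodeU (N : Net (Set α)) (A : Set α) : Prop :=
  ∃ S v, N.IsBlob S ∧ N.TopNode S v ∧ N.descUnion v = A

/-- `M` is a subnetwork of `N`: displayed by `N` and not `N` itself. -/
def Subnet (N M : Net α) : Prop := M.IsNetwork ∧ N.Displays M ∧ ¬ N.Iso M

/-- Equality of sets of networks up to isomorphism. -/
def SetEquiv (S T : Set (Net α)) : Prop :=
  ∀ M, (∃ M₁ ∈ S, Iso M M₁) ↔ ∃ M₂ ∈ T, Iso M M₂

/-- The subnetworks of `N` of level at most `k - 1`. -/
def lowerSubnets (N : Net α) (k : ℕ) : Set (Net α) :=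
  {M | N.Subnet M ∧ ∃ j < k, M.IsLevel j}

/-- The set of all MLLSs of `N`. -/
def mllsSet (N : Net α) : Set (Net α) :=
  {M | ∃ k, N.IsLevel k ∧ N.IsMLLS k M}

end Net

/-!
In a tree-child network, deleting a set `E` of reticulation edges leaves no node without
children except leaves, so cleaning up only suppresses the nodes that have become
indegree-1 outdegree-1, and these are endpoints of edges of `E`. The result of any clean-up
is therefore determined: its nodes are the unsuppressible ones, its edges are the paths
contracted through suppressed nodes, and every surviving node keeps its degrees. In
particular every reticulation edge is valid, and a cherry, whose parent no reticulation edge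
touches, survives in every MLLS.

Conversely, when `k ≥ 2` every level-`k` blob has two reticulations, and a reticulation edge
can be chosen in each so that the parent `py` of `y` is untouched and the parent `px` of `x`
is touched only if no child of `py` is. A cherry on `{x, y}` in the resulting MLLS then hangs
from `py`, and its edge to `x` could only contract a path through a suppressed child of `py`
ending with `px` suppressed, which is excluded.
-/

lemma wellFounded_of_acyclic {r : ℕ → ℕ → Prop} (s : Finset ℕ)
    (hs : ∀ a b, r a b → a ∈ s) (hr : ∀ v, ¬ Relation.TransGen r v v) : WellFounded r :=
  (measure fun v => (s.filter (Relation.TransGen r · v)).card).wf.mono fun a b hab => by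
    refine Finset.card_lt_card (Finset.ssubset_iff_of_subset ?_ |>.2 ⟨a, ?_, ?_⟩)
    · intro c hc
      rw [Finset.mem_filter] at hc ⊢
      exact ⟨hc.1, hc.2.tail hab⟩
    · exact Finset.mem_filter.2 ⟨hs a b hab, .single hab⟩
    · exact fun ha => hr a (Finset.mem_filter.1 ha).2

namespace Net

variable {α : Type}

section Degrees

variable {G : Net α} {a b c v : ℕ}

def parents (G : Net α) (v : ℕ) : Finset ℕ := (G.edges.filter fun e => e.2 = v).image Prod.fst

def children (G : Net α) (v : ℕ) : Finset ℕ := (G.edges.filter fun e => e.1 = v).image Prod.snd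

@[simp]
lemma mem_parents : a ∈ G.parents v ↔ G.Edge a v := by
  simp [parents, Edge]

@[simp]
lemma mem_children : b ∈ G.children v ↔ G.Edge v b := by
  simp [children, Edge]

lemma card_parents (G : Net α) (v : ℕ) : (G.parents v).card = G.indeg v :=
  Finset.card_image_of_injOn fun _ he _ he' h =>
    Prod.ext h ((Finset.mem_filter.1 he).2.trans (Finset.mem_filter.1 he').2.symm)

lemma card_children (G : Net α) (v : ℕ) : (G.children v).card = G.outdeg v :=
  Finset.card_image_of_injOn fun _ he _ he' h =>
    Prod.ext ((Finset.mem_filter.1 he).2.trans (Finset.mem_filter.1 he').2.symm) h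

lemma eq_of_indeg_le_one (h : G.indeg v ≤ 1) (ha : G.Edge a v) (hb : G.Edge b v) : a = b :=
  Finset.card_le_one.1 (by rwa [card_parents]) a (mem_parents.2 ha) b (mem_parents.2 hb)

lemma eq_of_outdeg_le_one (h : G.outdeg v ≤ 1) (ha : G.Edge v a) (hb : G.Edge v b) : a = b :=
  Finset.card_le_one.1 (by rwa [card_children]) a (mem_children.2 ha) b (mem_children.2 hb)

lemma exists_parent_of_indeg_pos (h : 0 < G.indeg v) : ∃ a, G.Edge a v := by
  obtain ⟨a, ha⟩ := Finset.card_pos.1 ((card_parents G v).symm ▸ h)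
  exact ⟨a, mem_parents.1 ha⟩

lemma exists_child_of_outdeg_pos (h : 0 < G.outdeg v) : ∃ b, G.Edge v b := by
  obtain ⟨b, hb⟩ := Finset.card_pos.1 ((card_children G v).symm ▸ h)
  exact ⟨b, mem_children.1 hb⟩

lemma outdeg_pos (h : G.Edge v b) : 0 < G.outdeg v := by
  rw [← card_children]
  exact Finset.card_pos.2 ⟨b, mem_children.2 h⟩

lemma two_le_indeg (ha : G.Edge a v) (hb : G.Edge b v) (hab : a ≠ b) : 2 ≤ G.indeg v := by
  rw [← card_parents]
  exact Finset.one_lt_card.2 ⟨a, mem_parents.2 ha, b, mem_parents.2 hb, hab⟩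

lemma two_le_outdeg (ha : G.Edge v a) (hb : G.Edge v b) (hab : a ≠ b) : 2 ≤ G.outdeg v := by
  rw [← card_children]
  exact Finset.one_lt_card.2 ⟨a, mem_children.2 ha, b, mem_children.2 hb, hab⟩

lemma eq_or_eq_of_outdeg_le_two (h : G.outdeg v ≤ 2) (ha : G.Edge v a) (hb : G.Edge v b)
    (hab : a ≠ b) (hc : G.Edge v c) : c = a ∨ c = b := by
  by_contra! hne
  have hsub : ({a, b, c} : Finset ℕ) ⊆ G.children v := by
    simp [Finset.insert_subset_iff, ha, hb, hc]
  have := Finset.card_le_card hsub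
  rw [card_children, Finset.card_insert_of_notMem (by simp [hab, hne.1.symm]),
    Finset.card_pair hne.2.symm] at this
  omega

def IsSuppressible (G : Net α) (v : ℕ) : Prop := G.indeg v = 1 ∧ G.outdeg v = 1

lemma card_edges_eq_sum_outdeg (h : ∀ e ∈ G.edges, e.1 ∈ G.verts) :
    G.edges.card = ∑ v ∈ G.verts, G.outdeg v :=
  Finset.card_eq_sum_card_fiberwise h

end Degrees

lemma IsLeaf.not_edge {N : Net α} {x b : ℕ} (hx : N.IsLeaf x) : ¬ N.Edge x b :=
  fun h => by have := outdeg_pos h; have := hx.2.2; omega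

lemma IsLeaf.not_isRetic {N : Net α} {v : ℕ} (h : N.IsLeaf v) : ¬ N.IsRetic v :=
  fun hr => by have := h.2.1; have := hr.2.1; omega

lemma IsTreeNode.not_isRetic {N : Net α} {v : ℕ} (h : N.IsTreeNode v) : ¬ N.IsRetic v :=
  fun hr => by have := h.2.1; have := hr.2.1; omega

namespace IsNetwork

variable {N : Net α} {a b p p' q v : ℕ}

lemma mem_verts_of_edge (hN : N.IsNetwork) (h : N.Edge a b) : a ∈ N.verts ∧ b ∈ N.verts :=
  hN.1 (a, b) h

lemma not_transGen_self (hN : N.IsNetwork) (v : ℕ) : ¬ Relation.TransGen N.Edge v v := by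
  intro hv
  obtain ⟨c, hvc, hcv⟩ := Relation.TransGen.head'_iff.1 hv
  exact hN.2.1 v c hvc hcv

lemma ne_of_edge (hN : N.IsNetwork) (h : N.Edge a b) : a ≠ b := by
  rintro rfl
  exact hN.not_transGen_self a (.single h)

lemma not_isSuppressible (hN : N.IsNetwork) (hv : v ∈ N.verts) : ¬ N.IsSuppressible v := by
  rintro ⟨h1, h2⟩
  rcases hN.2.2.2.1 v hv with ⟨-, h⟩ | ⟨-, h⟩ | ⟨-, h⟩ | ⟨-, h⟩ <;> omega

lemma isRetic_of_two_le_indeg (hN : N.IsNetwork) (hv : v ∈ N.verts) (h : 2 ≤ N.indeg v) :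
    N.IsRetic v := by
  rcases hN.2.2.2.1 v hv with h' | h' | h' | h'
  all_goals first | exact h' | (have := h'.2.1; omega)

lemma outdeg_le_two (hN : N.IsNetwork) (hv : v ∈ N.verts) : N.outdeg v ≤ 2 := by
  rcases hN.2.2.2.1 v hv with ⟨-, -, h⟩ | ⟨-, -, h⟩ | ⟨-, -, h⟩ | ⟨-, -, h⟩
  all_goals omega

lemma wellFounded_edge (hN : N.IsNetwork) : WellFounded N.Edge :=
  wellFounded_of_acyclic N.verts (fun _ _ h => (hN.mem_verts_of_edge h).1) hN.not_transGen_self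

lemma wellFounded_flip_edge (hN : N.IsNetwork) : WellFounded (flip N.Edge) :=
  wellFounded_of_acyclic N.verts (fun _ _ h => (hN.mem_verts_of_edge h).2)
    fun v h => hN.not_transGen_self v (Relation.transGen_swap.1 h)

lemma isRetic_of_edge_of_edge (hN : N.IsNetwork) (h : N.Edge p q) (h' : N.Edge p' q)
    (hne : p ≠ p') : N.IsRetic q :=
  hN.isRetic_of_two_le_indeg (hN.mem_verts_of_edge h).2 (two_le_indeg h h' hne)

end IsNetwork

namespace TreeChild

variable {N : Net α} {u v ρ : ℕ}

lemma exists_child_not_isRetic (hN : N.TreeChild) (hv : v ∈ N.verts) (hnl : ¬ N.IsLeaf v) :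
    ∃ c, N.Edge v c ∧ ¬ N.IsRetic c := by
  obtain ⟨c, hvc, hc⟩ := hN.2 v hv hnl
  exact ⟨c, hvc, hc.elim IsTreeNode.not_isRetic IsLeaf.not_isRetic⟩

/-- Besides `ρ`, the node `u` has a non-reticulate child, and only tree nodes have two
children. -/
lemma isTreeNode_of_edge_isRetic (hN : N.TreeChild) (h : N.Edge u ρ) (hρ : N.IsRetic ρ) :
    N.IsTreeNode u := by
  have hu := (hN.1.mem_verts_of_edge h).1
  obtain ⟨c, huc, hc⟩ := hN.exists_child_not_isRetic hu fun hl => hl.not_edge h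
  have h2 := two_le_outdeg h huc fun hρc => hc (hρc ▸ hρ)
  rcases hN.1.2.2.2.1 u hu with h' | h' | h' | h'
  all_goals first | exact h' | (have := h'.2.2; omega)

end TreeChild

section DeleteEdges

variable {N : Net α} {E : Finset (ℕ × ℕ)} {a b c v : ℕ}

def Incident (E : Finset (ℕ × ℕ)) (v : ℕ) : Prop := ∃ e ∈ E, e.1 = v ∨ e.2 = v

lemma deleteEdges_edge_iff : (N.deleteEdges E).Edge a b ↔ N.Edge a b ∧ (a, b) ∉ E :=
  Finset.mem_sdiff

lemma Edge.of_deleteEdges (h : (N.deleteEdges E).Edge a b) : N.Edge a b :=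
  (deleteEdges_edge_iff.1 h).1

lemma deleteEdges_edge_of_not_isRetic (hE : ∀ e ∈ E, N.IsReticEdge e) (h : N.Edge a b)
    (hb : ¬ N.IsRetic b) : (N.deleteEdges E).Edge a b :=
  deleteEdges_edge_iff.2 ⟨h, fun hab => hb (hE _ hab).2⟩

lemma indeg_deleteEdges_of_not_incident (h : ¬ Incident E v) :
    (N.deleteEdges E).indeg v = N.indeg v := by
  unfold indeg deleteEdges
  congr 1
  ext e
  simp only [Finset.mem_filter, Finset.mem_sdiff, and_congr_left_iff, and_iff_left_iff_imp]
  exact fun hv _ he => h ⟨e, he, Or.inr hv⟩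

lemma outdeg_deleteEdges_of_not_incident (h : ¬ Incident E v) :
    (N.deleteEdges E).outdeg v = N.outdeg v := by
  unfold outdeg deleteEdges
  congr 1
  ext e
  simp only [Finset.mem_filter, Finset.mem_sdiff, and_congr_left_iff, and_iff_left_iff_imp]
  exact fun hv _ he => h ⟨e, he, Or.inl hv⟩

lemma TreeChild.incident_of_isSuppressible (hN : N.TreeChild) (hv : v ∈ N.verts)
    (h : (N.deleteEdges E).IsSuppressible v) : Incident E v := by
  by_contra hE
  rw [IsSuppressible, indeg_deleteEdges_of_not_incident hE,
    outdeg_deleteEdges_of_not_incident hE] at h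
  exact hN.1.not_isSuppressible hv h

/-- The tree-child child of `v` would be `c`, since an edge into a non-reticulation is never
deleted. -/
lemma TreeChild.not_isRetic_of_deleteEdges (hN : N.TreeChild) (hE : ∀ e ∈ E, N.IsReticEdge e)
    (hp : (N.deleteEdges E).outdeg v ≤ 1) (hvc : (N.deleteEdges E).Edge v c) :
    ¬ N.IsRetic c := by
  intro hc
  have hvN := hvc.of_deleteEdges
  obtain ⟨c', hvc', hc'⟩ :=
    hN.exists_child_not_isRetic (hN.1.mem_verts_of_edge hvN).1 fun hl => hl.not_edge hvN
  have := eq_of_outdeg_le_one hp hvc (deleteEdges_edge_of_not_isRetic hE hvc' hc')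
  exact hc' (this ▸ hc)

lemma TreeChild.exists_deleteEdges_child (hN : N.TreeChild) (hE : ∀ e ∈ E, N.IsReticEdge e)
    (hv : v ∈ N.verts) (hnl : ¬ N.IsLeaf v) : ∃ c, (N.deleteEdges E).Edge v c := by
  obtain ⟨c, hvc, hc⟩ := hN.exists_child_not_isRetic hv hnl
  exact ⟨c, deleteEdges_edge_of_not_isRetic hE hvc hc⟩

end DeleteEdges

section Contraction

open Relation

variable {D G G' : Net α} {a b c d v : ℕ}

def IntoRemoved (D G : Net α) (p q : ℕ) : Prop := D.Edge p q ∧ q ∉ G.verts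

def FromRemoved (D G : Net α) (p q : ℕ) : Prop := D.Edge p q ∧ p ∉ G.verts

/-- A path `a → ⋯ → b` of `D` whose interior nodes are all missing from `G`: the edges of a
clean-up `G` of `D` are exactly these contracted paths. -/
def ContractedEdge (D G : Net α) (a b : ℕ) : Prop :=
  ∃ d, ReflTransGen (IntoRemoved D G) a d ∧ D.Edge d b

lemma eq_or_not_mem_of_intoRemoved (h : ReflTransGen (IntoRemoved D G) a d) :
    a = d ∨ d ∉ G.verts := by
  rcases h.cases_tail with rfl | ⟨_, _, h⟩
  exacts [Or.inl rfl, Or.inr h.2]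

lemma eq_or_not_mem_of_fromRemoved (h : ReflTransGen (FromRemoved D G) c b) :
    c = b ∨ c ∉ G.verts := by
  rcases h.cases_head with rfl | ⟨_, h, _⟩
  exacts [Or.inl rfl, Or.inr h.2]

lemma contractedEdge_iff :
    ContractedEdge D G a b ↔ ∃ c, D.Edge a c ∧ ReflTransGen (FromRemoved D G) c b := by
  constructor
  · rintro ⟨d, had, hdb⟩
    induction had using ReflTransGen.head_induction_on with
    | refl => exact ⟨b, hdb, .refl⟩
    | head haq _ ih =>
      obtain ⟨c, hqc, hcb⟩ := ih
      exact ⟨_, haq.1, .head ⟨hqc, haq.2⟩ hcb⟩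
  · rintro ⟨c, hac, hcb⟩
    induction hcb with
    | refl => exact ⟨a, .refl, hac⟩
    | tail _ htb ih =>
      obtain ⟨d, had, hdt⟩ := ih
      exact ⟨_, had.tail ⟨hdt, htb.2⟩, htb.1⟩

lemma ContractedEdge.mono (hG : G'.verts ⊆ G.verts) (h : ContractedEdge D G a b) :
    ContractedEdge D G' a b := by
  obtain ⟨d, had, hdb⟩ := h
  exact ⟨d, ReflTransGen.mono (fun _ _ h => ⟨h.1, fun h' => h.2 (hG h')⟩) _ _ had, hdb⟩

lemma ContractedEdge.trans (hav : ContractedEdge D G a v) (hv : v ∉ G.verts)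
    (hvb : ContractedEdge D G v b) : ContractedEdge D G a b := by
  obtain ⟨d, had, hdv⟩ := hav
  obtain ⟨d', hvd', hd'b⟩ := hvb
  exact ⟨d', (had.tail ⟨hdv, hv⟩).trans hvd', hd'b⟩

lemma ContractedEdge.transGen (h : ContractedEdge D G a b) : TransGen D.Edge a b := by
  obtain ⟨d, had, hdb⟩ := h
  exact TransGen.tail' (ReflTransGen.mono (fun _ _ h => h.1) _ _ had) hdb

/-- The path meets `v` at most once, since `D` has no cycle through `v`. -/
lemma ContractedEdge.of_verts_eq_erase (hG' : G'.verts = G.verts.erase v)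
    (hvv : ¬ ContractedEdge D G v v) (h : ContractedEdge D G' a b) :
    ContractedEdge D G a b ∨ (ContractedEdge D G a v ∧ ContractedEdge D G v b) := by
  obtain ⟨d, had, hdb⟩ := h
  suffices ReflTransGen (IntoRemoved D G) a d ∨
      (ContractedEdge D G a v ∧ ReflTransGen (IntoRemoved D G) v d) from
    this.imp (fun h => ⟨d, h, hdb⟩) fun h => ⟨h.1, d, h.2, hdb⟩
  clear hdb
  induction had with
  | refl => exact Or.inl .refl
  | @tail t q _ htq ih =>
    by_cases hq : q = v
    · subst hq
      rcases ih with h | h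
      · exact Or.inr ⟨⟨t, h, htq.1⟩, .refl⟩
      · exact absurd ⟨t, h.2, htq.1⟩ hvv
    · have hqG : q ∉ G.verts := fun h => htq.2 (hG' ▸ Finset.mem_erase.2 ⟨hq, h⟩)
      exact ih.imp (·.tail ⟨htq.1, hqG⟩) fun h => ⟨h.1, h.2.tail ⟨htq.1, hqG⟩⟩

end Contraction

lemma IsNetwork.ne_of_contractedEdge {N G : Net α} {E : Finset (ℕ × ℕ)} {a b : ℕ}
    (hN : N.IsNetwork) (h : ContractedEdge (N.deleteEdges E) G a b) : a ≠ b := by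
  rintro rfl
  exact hN.not_transGen_self a
    (Relation.TransGen.mono (fun _ _ h => Edge.of_deleteEdges h) _ _ h.transGen)

/-- Holds at every stage of a clean-up of `N.deleteEdges E`. -/
structure CleanupInv (N : Net α) (E : Finset (ℕ × ℕ)) (G : Net α) : Prop where
  lab_eq : G.lab = N.lab
  verts_subset : G.verts ⊆ N.verts
  isSuppressible_of_not_mem :
    ∀ v ∈ N.verts, v ∉ G.verts → (N.deleteEdges E).IsSuppressible v
  edge_iff : ∀ a b, G.Edge a b ↔
    a ∈ G.verts ∧ b ∈ G.verts ∧ ContractedEdge (N.deleteEdges E) G a b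

namespace CleanupInv

open Relation

variable {N G G' M : Net α} {E : Finset (ℕ × ℕ)}
  {a a₁ a₂ b b₁ b₂ c c₁ c₂ p p₁ p₂ q u v w : ℕ}

lemma deleteEdges (hN : N.IsNetwork) : CleanupInv N E (N.deleteEdges E) where
  lab_eq := rfl
  verts_subset := subset_rfl
  isSuppressible_of_not_mem _ hv hv' := absurd hv hv'
  edge_iff a b := by
    refine ⟨fun h => ⟨(hN.mem_verts_of_edge h.of_deleteEdges).1,
      (hN.mem_verts_of_edge h.of_deleteEdges).2, a, .refl, h⟩, ?_⟩
    rintro ⟨-, -, d, had, hdb⟩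
    rcases had.cases_tail with rfl | ⟨_, _, h⟩
    · exact hdb
    · exact absurd (hN.mem_verts_of_edge h.1.of_deleteEdges).2 h.2

lemma isSuppressible_of_intoRemoved (hN : N.IsNetwork) (hG : CleanupInv N E G)
    (h : IntoRemoved (N.deleteEdges E) G p q) : (N.deleteEdges E).IsSuppressible q :=
  hG.isSuppressible_of_not_mem q (hN.mem_verts_of_edge h.1.of_deleteEdges).2 h.2

lemma isSuppressible_of_fromRemoved (hN : N.IsNetwork) (hG : CleanupInv N E G)
    (h : FromRemoved (N.deleteEdges E) G p q) : (N.deleteEdges E).IsSuppressible p :=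
  hG.isSuppressible_of_not_mem p (hN.mem_verts_of_edge h.1.of_deleteEdges).1 h.2

lemma intoRemoved_leftUnique (hN : N.IsNetwork) (hG : CleanupInv N E G) :
    Relator.LeftUnique (IntoRemoved (N.deleteEdges E) G) := fun _ _ _ h h' =>
  eq_of_indeg_le_one (hG.isSuppressible_of_intoRemoved hN h).1.le h.1 h'.1

lemma fromRemoved_rightUnique (hN : N.IsNetwork) (hG : CleanupInv N E G) :
    Relator.RightUnique (FromRemoved (N.deleteEdges E) G) := fun _ _ _ h h' =>
  eq_of_outdeg_le_one (hG.isSuppressible_of_fromRemoved hN h).2.le h.1 h'.1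

/-- A removed node has a non-reticulate child. -/
lemma mem_of_edge_isRetic (hN : N.TreeChild) (hE : ∀ e ∈ E, N.IsReticEdge e)
    (hG : CleanupInv N E G) (hpq : (N.deleteEdges E).Edge p q) (hq : N.IsRetic q) :
    p ∈ G.verts := by
  by_contra hp
  exact hN.not_isRetic_of_deleteEdges hE
    (hG.isSuppressible_of_fromRemoved hN.1 ⟨hpq, hp⟩).2.le hpq hq

lemma eq_of_fromRemoved (hN : N.TreeChild) (hE : ∀ e ∈ E, N.IsReticEdge e)
    (hG : CleanupInv N E G) (h : FromRemoved (N.deleteEdges E) G p q)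
    (h' : (N.deleteEdges E).Edge a q) : p = a := by
  by_contra hne
  exact h.2 (hG.mem_of_edge_isRetic hN hE h.1
    (hN.1.isRetic_of_edge_of_edge h.1.of_deleteEdges h'.of_deleteEdges hne))

lemma exists_fromRemoved_chain (hN : N.IsNetwork) (hG : CleanupInv N E G)
    (hc : c ∈ N.verts) :
    ∃ b ∈ G.verts, ReflTransGen (FromRemoved (N.deleteEdges E) G) c b := by
  induction c using hN.wellFounded_flip_edge.induction with
  | _ c ih =>
    by_cases hcG : c ∈ G.verts
    · exact ⟨c, hcG, .refl⟩
    obtain ⟨c', hcc'⟩ := exists_child_of_outdeg_pos (hG.isSuppressible_of_not_mem c hc hcG).2.ge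
    obtain ⟨b, hb, hc'b⟩ :=
      ih c' hcc'.of_deleteEdges (hN.mem_verts_of_edge hcc'.of_deleteEdges).2
    exact ⟨b, hb, .head ⟨hcc', hcG⟩ hc'b⟩

lemma exists_intoRemoved_chain (hN : N.IsNetwork) (hG : CleanupInv N E G)
    (hp : p ∈ N.verts) :
    ∃ a ∈ G.verts, ReflTransGen (IntoRemoved (N.deleteEdges E) G) a p := by
  induction p using hN.wellFounded_edge.induction with
  | _ p ih =>
    by_cases hpG : p ∈ G.verts
    · exact ⟨p, hpG, .refl⟩
    obtain ⟨p', hp'p⟩ := exists_parent_of_indeg_pos (hG.isSuppressible_of_not_mem p hp hpG).1.ge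
    obtain ⟨a, ha, hap'⟩ :=
      ih p' hp'p.of_deleteEdges (hN.mem_verts_of_edge hp'p.of_deleteEdges).1
    exact ⟨a, ha, hap'.tail ⟨hp'p, hpG⟩⟩

lemma eq_of_fromRemoved_chains (hN : N.IsNetwork) (hG : CleanupInv N E G)
    (h₁ : ReflTransGen (FromRemoved (N.deleteEdges E) G) c b₁)
    (h₂ : ReflTransGen (FromRemoved (N.deleteEdges E) G) c b₂)
    (hb₁ : b₁ ∈ G.verts) (hb₂ : b₂ ∈ G.verts) : b₁ = b₂ := by
  rcases ReflTransGen.total_of_right_unique (hG.fromRemoved_rightUnique hN) h₁ h₂ with h | h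
  · exact (eq_or_not_mem_of_fromRemoved h).resolve_right (not_not.2 hb₁)
  · exact ((eq_or_not_mem_of_fromRemoved h).resolve_right (not_not.2 hb₂)).symm

lemma eq_of_intoRemoved_chains (hN : N.IsNetwork) (hG : CleanupInv N E G)
    (h₁ : ReflTransGen (IntoRemoved (N.deleteEdges E) G) a₁ p)
    (h₂ : ReflTransGen (IntoRemoved (N.deleteEdges E) G) a₂ p)
    (ha₁ : a₁ ∈ G.verts) (ha₂ : a₂ ∈ G.verts) : a₁ = a₂ := by
  have hru : Relator.RightUnique (Function.swap (IntoRemoved (N.deleteEdges E) G)) :=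
    fun _ _ _ h h' => hG.intoRemoved_leftUnique hN h h'
  rcases ReflTransGen.total_of_right_unique hru (reflTransGen_swap.2 h₁)
    (reflTransGen_swap.2 h₂) with h | h
  · exact ((eq_or_not_mem_of_intoRemoved (reflTransGen_swap.1 h)).resolve_right
      (not_not.2 ha₁)).symm
  · exact (eq_or_not_mem_of_intoRemoved (reflTransGen_swap.1 h)).resolve_right (not_not.2 ha₂)

/-- Where the two chains merge, the removed predecessor would have to be `v` itself. -/
lemma eq_of_fromRemoved_chains_of_edge (hN : N.TreeChild) (hE : ∀ e ∈ E, N.IsReticEdge e)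
    (hG : CleanupInv N E G) (hv : v ∈ G.verts) (hc₁ : (N.deleteEdges E).Edge v c₁)
    (hc₂ : (N.deleteEdges E).Edge v c₂)
    (h₁ : ReflTransGen (FromRemoved (N.deleteEdges E) G) c₁ b)
    (h₂ : ReflTransGen (FromRemoved (N.deleteEdges E) G) c₂ b) : c₁ = c₂ := by
  have key : ∀ {c c'}, (N.deleteEdges E).Edge v c' →
      ReflTransGen (FromRemoved (N.deleteEdges E) G) c c' → c = c' := by
    intro c c' hvc' h
    rcases h.cases_tail with rfl | ⟨t, -, htc'⟩
    · rfl
    · exact absurd (hG.eq_of_fromRemoved hN hE htc' hvc' ▸ hv) htc'.2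
  have hru : Relator.RightUnique (Function.swap (FromRemoved (N.deleteEdges E) G)) :=
    fun _ _ _ h h' => hG.eq_of_fromRemoved hN hE h h'.1
  rcases ReflTransGen.total_of_right_unique hru (reflTransGen_swap.2 h₁)
    (reflTransGen_swap.2 h₂) with h | h
  · exact (key hc₁ (reflTransGen_swap.1 h)).symm
  · exact key hc₂ (reflTransGen_swap.1 h)

/-- Two distinct parents make `v` a reticulation, and then neither parent was removed. -/
lemma eq_of_intoRemoved_chains_of_edge (hN : N.TreeChild) (hE : ∀ e ∈ E, N.IsReticEdge e)
    (hG : CleanupInv N E G) (h₁ : ReflTransGen (IntoRemoved (N.deleteEdges E) G) a p₁)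
    (h₂ : ReflTransGen (IntoRemoved (N.deleteEdges E) G) a p₂)
    (hp₁ : (N.deleteEdges E).Edge p₁ v) (hp₂ : (N.deleteEdges E).Edge p₂ v) :
    p₁ = p₂ := by
  by_contra hne
  have hv := hN.1.isRetic_of_edge_of_edge hp₁.of_deleteEdges hp₂.of_deleteEdges hne
  have e₁ := (eq_or_not_mem_of_intoRemoved h₁).resolve_right
    (not_not.2 (hG.mem_of_edge_isRetic hN hE hp₁ hv))
  have e₂ := (eq_or_not_mem_of_intoRemoved h₂).resolve_right
    (not_not.2 (hG.mem_of_edge_isRetic hN hE hp₂ hv))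
  exact hne (e₁.symm.trans e₂)

lemma outdeg_eq (hN : N.TreeChild) (hE : ∀ e ∈ E, N.IsReticEdge e) (hG : CleanupInv N E G)
    (hv : v ∈ G.verts) : G.outdeg v = (N.deleteEdges E).outdeg v := by
  set D := N.deleteEdges E
  have hchild : ∀ b, G.Edge v b ↔
      b ∈ G.verts ∧ ∃ c, D.Edge v c ∧ ReflTransGen (FromRemoved D G) c b := by
    intro b
    rw [hG.edge_iff, contractedEdge_iff]
    exact ⟨fun h => h.2, fun h => ⟨hv, h⟩⟩
  have hmem : ∀ b ∈ G.children v, b ∈ G.verts := fun b hb =>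
    ((hchild b).1 (mem_children.1 hb)).1
  rw [← card_children, ← card_children]
  refine le_antisymm (Finset.card_le_card_of_forall_subsingleton
      (fun b c => ReflTransGen (FromRemoved D G) c b) (fun b hb => ?_) fun c _ => ?_)
    (Finset.card_le_card_of_forall_subsingleton
      (fun c b => ReflTransGen (FromRemoved D G) c b) (fun c hc => ?_) fun b _ => ?_)
  · obtain ⟨-, c, hvc, hcb⟩ := (hchild b).1 (mem_children.1 hb)
    exact ⟨c, mem_children.2 hvc, hcb⟩
  · rintro b₁ ⟨hb₁, h₁⟩ b₂ ⟨hb₂, h₂⟩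
    exact hG.eq_of_fromRemoved_chains hN.1 h₁ h₂ (hmem b₁ hb₁) (hmem b₂ hb₂)
  · have hvc := mem_children.1 hc
    obtain ⟨b, hb, hcb⟩ :=
      hG.exists_fromRemoved_chain hN.1 (hN.1.mem_verts_of_edge hvc.of_deleteEdges).2
    exact ⟨b, mem_children.2 ((hchild b).2 ⟨hb, c, hvc, hcb⟩), hcb⟩
  · rintro c₁ ⟨hc₁, h₁⟩ c₂ ⟨hc₂, h₂⟩
    exact hG.eq_of_fromRemoved_chains_of_edge hN hE hv (mem_children.1 hc₁)
      (mem_children.1 hc₂) h₁ h₂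

lemma indeg_eq (hN : N.TreeChild) (hE : ∀ e ∈ E, N.IsReticEdge e) (hG : CleanupInv N E G)
    (hv : v ∈ G.verts) : G.indeg v = (N.deleteEdges E).indeg v := by
  set D := N.deleteEdges E
  have hparent : ∀ a, G.Edge a v ↔
      a ∈ G.verts ∧ ∃ p, ReflTransGen (IntoRemoved D G) a p ∧ D.Edge p v := by
    intro a
    rw [hG.edge_iff]
    exact ⟨fun h => ⟨h.1, h.2.2⟩, fun h => ⟨h.1, hv, h.2⟩⟩
  have hmem : ∀ a ∈ G.parents v, a ∈ G.verts := fun a ha =>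
    ((hparent a).1 (mem_parents.1 ha)).1
  rw [← card_parents, ← card_parents]
  refine le_antisymm (Finset.card_le_card_of_forall_subsingleton
      (fun a p => ReflTransGen (IntoRemoved D G) a p) (fun a ha => ?_) fun p _ => ?_)
    (Finset.card_le_card_of_forall_subsingleton
      (fun p a => ReflTransGen (IntoRemoved D G) a p) (fun p hp => ?_) fun a _ => ?_)
  · obtain ⟨-, p, hap, hpv⟩ := (hparent a).1 (mem_parents.1 ha)
    exact ⟨p, mem_parents.2 hpv, hap⟩
  · rintro a₁ ⟨ha₁, h₁⟩ a₂ ⟨ha₂, h₂⟩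
    exact hG.eq_of_intoRemoved_chains hN.1 h₁ h₂ (hmem a₁ ha₁) (hmem a₂ ha₂)
  · have hpv := mem_parents.1 hp
    obtain ⟨a, ha, hap⟩ :=
      hG.exists_intoRemoved_chain hN.1 (hN.1.mem_verts_of_edge hpv.of_deleteEdges).1
    exact ⟨a, mem_parents.2 ((hparent a).2 ⟨ha, p, hap, hpv⟩), hap⟩
  · rintro p₁ ⟨hp₁, h₁⟩ p₂ ⟨hp₂, h₂⟩
    exact hG.eq_of_intoRemoved_chains_of_edge hN hE h₁ h₂ (mem_parents.1 hp₁)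
      (mem_parents.1 hp₂)

lemma isSuppressible_of_mem (hN : N.TreeChild) (hE : ∀ e ∈ E, N.IsReticEdge e)
    (hG : CleanupInv N E G) (hv : v ∈ G.verts) :
    (N.deleteEdges E).IsSuppressible v ↔ G.IsSuppressible v := by
  rw [IsSuppressible, IsSuppressible, hG.indeg_eq hN hE hv, hG.outdeg_eq hN hE hv]

lemma suppress (hN : N.TreeChild) (hE : ∀ e ∈ E, N.IsReticEdge e) (hG : CleanupInv N E G)
    (h1 : G.indeg v = 1) (h2 : G.outdeg v = 1) (huG : G.Edge u v) (hwG : G.Edge v w) :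
    CleanupInv N E ⟨G.verts.erase v,
      insert (u, w) (G.edges.filter fun e => e.1 ≠ v ∧ e.2 ≠ v), G.lab⟩ := by
  set G' : Net α := ⟨G.verts.erase v,
    insert (u, w) (G.edges.filter fun e => e.1 ≠ v ∧ e.2 ≠ v), G.lab⟩
  obtain ⟨hu, hv, huv⟩ := (hG.edge_iff u v).1 huG
  obtain ⟨-, hw, hvw⟩ := (hG.edge_iff v w).1 hwG
  have hacyc {a b : ℕ} (h : ContractedEdge (N.deleteEdges E) G a b) : a ≠ b :=
    hN.1.ne_of_contractedEdge h
  have hsub : G'.verts ⊆ G.verts := Finset.erase_subset v G.verts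
  refine ⟨hG.lab_eq, hsub.trans hG.verts_subset, fun z hz hz' => ?_, fun a b => ?_⟩
  · by_cases hzv : z = v
    · exact hzv ▸ (hG.isSuppressible_of_mem hN hE hv).2 ⟨h1, h2⟩
    · exact hG.isSuppressible_of_not_mem z hz fun h => hz' (Finset.mem_erase.2 ⟨hzv, h⟩)
  show (a, b) ∈ insert (u, w) _ ↔ _
  rw [Finset.mem_insert, Finset.mem_filter]
  constructor
  · rintro (hab | ⟨hab, hav, hbv⟩)
    · obtain ⟨rfl, rfl⟩ := Prod.mk.inj hab
      exact ⟨Finset.mem_erase.2 ⟨hacyc huv, hu⟩,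
        Finset.mem_erase.2 ⟨(hacyc hvw).symm, hw⟩,
        (huv.mono hsub).trans (Finset.notMem_erase v G.verts) (hvw.mono hsub)⟩
    · obtain ⟨ha, hb, h⟩ := (hG.edge_iff a b).1 hab
      exact ⟨Finset.mem_erase.2 ⟨hav, ha⟩, Finset.mem_erase.2 ⟨hbv, hb⟩, h.mono hsub⟩
  · rintro ⟨ha, hb, h⟩
    rcases h.of_verts_eq_erase rfl (fun h => hacyc h rfl) with h | ⟨hav, hvb⟩
    · exact Or.inr ⟨(hG.edge_iff a b).2 ⟨hsub ha, hsub hb, h⟩,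
        (Finset.mem_erase.1 ha).1, (Finset.mem_erase.1 hb).1⟩
    · left
      rw [eq_of_indeg_le_one h1.le ((hG.edge_iff a v).2 ⟨hsub ha, hv, hav⟩) huG,
        eq_of_outdeg_le_one h2.le ((hG.edge_iff v b).2 ⟨hv, hsub hb, hvb⟩) hwG]

lemma cleanStep (hN : N.TreeChild) (hE : ∀ e ∈ E, N.IsReticEdge e) (hG : CleanupInv N E G)
    (h : CleanStep G G') : CleanupInv N E G' := by
  cases h with
  | delNode v hv h0 hlab =>
    -- `v` keeps its outdegree `0` from `N.deleteEdges E`, so it is a leaf of `N` and labelled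
    have hleaf : N.IsLeaf v := by
      by_contra hnl
      obtain ⟨c, hvc⟩ := hN.exists_deleteEdges_child hE (hG.verts_subset hv) hnl
      have := outdeg_pos hvc
      rw [← hG.outdeg_eq hN hE hv] at this
      omega
    obtain ⟨l, hl⟩ := (hN.1.2.2.2.2.1 v).2 hleaf
    rw [hG.lab_eq, hl] at hlab
    exact absurd hlab (Option.some_ne_none l)
  | suppress u v w h1 h2 hu hw => exact hG.suppress hN hE h1 h2 hu hw

lemma reflTransGen (hN : N.TreeChild) (hE : ∀ e ∈ E, N.IsReticEdge e) (hG : CleanupInv N E G)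
    (h : ReflTransGen CleanStep G M) : CleanupInv N E M := by
  induction h with
  | refl => exact hG
  | tail _ hstep ih => exact ih.cleanStep hN hE hstep

lemma card_lt_of_cleanStep (hG : CleanupInv N E G) (h : CleanStep G G') :
    G'.verts.card + G'.edges.card < G.verts.card + G.edges.card := by
  cases h with
  | delNode v hv _ _ =>
    have := Finset.card_erase_lt_of_mem hv
    have := Finset.card_filter_le G.edges fun e => e.1 ≠ v ∧ e.2 ≠ v
    simp only [deleteNode]
    omega
  | suppress u v w _ _ hu _ =>
    have := Finset.card_erase_lt_of_mem ((hG.edge_iff u v).1 hu).2.1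
    have := Finset.card_insert_le (u, w) (G.edges.filter fun e => e.1 ≠ v ∧ e.2 ≠ v)
    have := Finset.card_lt_card
      (Finset.filter_ssubset (p := fun e : ℕ × ℕ => e.1 ≠ v ∧ e.2 ≠ v)
        |>.2 ⟨(u, v), hu, fun h => h.2 rfl⟩)
    dsimp only
    omega

lemma exists_cleansTo (hN : N.TreeChild) (hE : ∀ e ∈ E, N.IsReticEdge e)
    (hG : CleanupInv N E G) : ∃ M, CleansTo G M := by
  induction hn : G.verts.card + G.edges.card using Nat.strong_induction_on generalizing G with
  | _ n ih =>
    by_cases hterm : ∀ G', ¬ CleanStep G G'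
    · exact ⟨G, .refl, hterm⟩
    obtain ⟨G', hstep⟩ := not_forall_not.1 hterm
    obtain ⟨M, hG'M, hM⟩ :=
      ih _ (hn ▸ hG.card_lt_of_cleanStep hstep) (hG.cleanStep hN hE hstep) rfl
    exact ⟨M, .head hstep hG'M, hM⟩

end CleanupInv

lemma TreeChild.exists_cleansTo {N : Net α} {E : Finset (ℕ × ℕ)} (hN : N.TreeChild)
    (hE : ∀ e ∈ E, N.IsReticEdge e) : ∃ M, CleansTo (N.deleteEdges E) M :=
  (CleanupInv.deleteEdges hN.1).exists_cleansTo hN hE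

namespace CleansTo

variable {N M : Net α} {E : Finset (ℕ × ℕ)} {v : ℕ}

lemma cleanupInv (hN : N.TreeChild) (hE : ∀ e ∈ E, N.IsReticEdge e)
    (h : CleansTo (N.deleteEdges E) M) : CleanupInv N E M :=
  (CleanupInv.deleteEdges hN.1).reflTransGen hN hE h.1

lemma mem_verts_iff (hN : N.TreeChild) (hE : ∀ e ∈ E, N.IsReticEdge e)
    (h : CleansTo (N.deleteEdges E) M) :
    v ∈ M.verts ↔ v ∈ N.verts ∧ ¬ (N.deleteEdges E).IsSuppressible v := by
  have hM := h.cleanupInv hN hE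
  refine ⟨fun hv => ⟨hM.verts_subset hv, fun hs => ?_⟩, fun ⟨hv, hs⟩ => ?_⟩
  · obtain ⟨h1, h2⟩ := (hM.isSuppressible_of_mem hN hE hv).1 hs
    obtain ⟨a, ha⟩ := exists_parent_of_indeg_pos h1.ge
    obtain ⟨b, hb⟩ := exists_child_of_outdeg_pos h2.ge
    exact h.2 _ (.suppress M a v b h1 h2 ha hb)
  · by_contra hv'
    exact hs (hM.isSuppressible_of_not_mem v hv hv')

end CleansTo

section Validity

variable {N : Net α} {e : ℕ × ℕ} {r u v : ℕ}

lemma deleteEdges_singleton (N : Net α) (e : ℕ × ℕ) : N.deleteEdges {e} = N.deleteEdge e := by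
  simp only [deleteEdges, deleteEdge, Finset.sdiff_singleton_eq_erase]

lemma outdeg_deleteEdge_of_ne (h : v ≠ e.1) : (N.deleteEdge e).outdeg v = N.outdeg v := by
  unfold outdeg deleteEdge
  rw [Finset.filter_erase, Finset.erase_eq_of_notMem fun he => h (Finset.mem_filter.1 he).2.symm]

lemma indeg_deleteEdge_of_ne (h : v ≠ e.2) : (N.deleteEdge e).indeg v = N.indeg v := by
  unfold indeg deleteEdge
  rw [Finset.filter_erase, Finset.erase_eq_of_notMem fun he => h (Finset.mem_filter.1 he).2.symm]

lemma outdeg_deleteEdge_add_one (he : e ∈ N.edges) :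
    (N.deleteEdge e).outdeg e.1 + 1 = N.outdeg e.1 := by
  unfold outdeg deleteEdge
  rw [Finset.filter_erase]
  exact Finset.card_erase_add_one (Finset.mem_filter.2 ⟨he, rfl⟩)

lemma indeg_deleteEdge_add_one (he : e ∈ N.edges) :
    (N.deleteEdge e).indeg e.2 + 1 = N.indeg e.2 := by
  unfold indeg deleteEdge
  rw [Finset.filter_erase]
  exact Finset.card_erase_add_one (Finset.mem_filter.2 ⟨he, rfl⟩)

lemma TreeChild.isSuppressible_deleteEdge_iff (hN : N.TreeChild) (he : N.IsReticEdge (u, r))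
    (hv : v ∈ N.verts) : (N.deleteEdge (u, r)).IsSuppressible v ↔ v = u ∨ v = r := by
  obtain ⟨heN, hr⟩ := he
  have hu := hN.isTreeNode_of_edge_isRetic heN hr
  have hur : u ≠ r := hN.1.ne_of_edge heN
  refine ⟨fun hs => ?_, ?_⟩
  · rw [← deleteEdges_singleton] at hs
    obtain ⟨e, he, h⟩ := hN.incident_of_isSuppressible hv hs
    rw [Finset.mem_singleton] at he
    subst he
    exact h.imp Eq.symm Eq.symm
  · rintro (rfl | rfl)
    · have h1 := outdeg_deleteEdge_add_one (N := N) heN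
      have h2 := hu.2.2
      exact ⟨(indeg_deleteEdge_of_ne hur).trans hu.2.1, by simp only at h1 h2; omega⟩
    · have h1 := indeg_deleteEdge_add_one (N := N) heN
      have h2 := hr.2.1
      exact ⟨by simp only at h1 h2; omega, (outdeg_deleteEdge_of_ne hur.symm).trans hr.2.2⟩

/-- Exactly `u` and `r` are suppressed, and by the handshake count the edge count drops by
`outdeg u + outdeg r = 3`. -/
theorem TreeChild.validEdge (hN : N.TreeChild) (he : N.IsReticEdge e) : N.ValidEdge e := by
  obtain ⟨u, r⟩ := e
  have hur : u ≠ r := hN.1.ne_of_edge he.1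
  have hE : ∀ e ∈ ({(u, r)} : Finset (ℕ × ℕ)), N.IsReticEdge e := fun e he' =>
    Finset.mem_singleton.1 he' ▸ he
  refine ⟨he, fun M hM => ?_⟩
  rw [← deleteEdges_singleton] at hM
  have hMinv := hM.cleanupInv hN hE
  have hverts : M.verts = N.verts \ {u, r} := by
    ext v
    rw [hM.mem_verts_iff hN hE, deleteEdges_singleton, Finset.mem_sdiff, Finset.mem_insert,
      Finset.mem_singleton]
    exact and_congr_right fun hv => not_congr (hN.isSuppressible_deleteEdge_iff he hv)
  have hsub : {u, r} ⊆ N.verts := by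
    simp [Finset.insert_subset_iff, hN.1.mem_verts_of_edge he.1]
  constructor
  · rw [hverts, Finset.card_sdiff_of_subset hsub, Finset.card_pair hur]
    have := Finset.card_le_card hsub
    rw [Finset.card_pair hur] at this
    omega
  · calc M.edges.card + 3
        = ∑ v ∈ N.verts \ {u, r}, N.outdeg v + ∑ v ∈ {u, r}, N.outdeg v := by
          rw [card_edges_eq_sum_outdeg fun e he => ((hMinv.edge_iff e.1 e.2).1 he).1, hverts,
            Finset.sum_pair hur, (hN.isTreeNode_of_edge_isRetic he.1 he.2).2.2, he.2.2.2]
          congr 1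
          refine Finset.sum_congr rfl fun v hv => ?_
          have hvu : v ≠ u := fun h => (Finset.mem_sdiff.1 hv).2 (by simp [h])
          rw [hMinv.outdeg_eq hN hE (hverts ▸ hv), deleteEdges_singleton,
            outdeg_deleteEdge_of_ne hvu]
      _ = N.edges.card := by
          rw [Finset.sum_sdiff hsub, card_edges_eq_sum_outdeg fun e he => (hN.1.1 e he).1]

end Validity

section Cherry

variable {N M : Net α} {E : Finset (ℕ × ℕ)} {a b v x y px py : ℕ}

lemma not_incident_of_isLeaf (hE : ∀ e ∈ E, N.IsReticEdge e) (hx : N.IsLeaf x) :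
    ¬ Incident E x := by
  rintro ⟨e, he, h | h⟩
  · exact hx.not_edge (b := e.2) (h ▸ (hE e he).1)
  · exact hx.not_isRetic (h ▸ (hE e he).2)

namespace CleansTo

lemma mem_verts_of_not_incident (hN : N.TreeChild) (hE : ∀ e ∈ E, N.IsReticEdge e)
    (h : CleansTo (N.deleteEdges E) M) (hv : v ∈ N.verts) (hvE : ¬ Incident E v) :
    v ∈ M.verts :=
  (h.mem_verts_iff hN hE).2 ⟨hv, fun hs => hvE (hN.incident_of_isSuppressible hv hs)⟩

lemma incident_of_not_mem_verts (hN : N.TreeChild) (hE : ∀ e ∈ E, N.IsReticEdge e)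
    (h : CleansTo (N.deleteEdges E) M) (hv : v ∈ N.verts) (hvM : v ∉ M.verts) : Incident E v :=
  not_not.1 fun hvE => hvM (h.mem_verts_of_not_incident hN hE hv hvE)

lemma edge_of_deleteEdges (hN : N.TreeChild) (hE : ∀ e ∈ E, N.IsReticEdge e)
    (h : CleansTo (N.deleteEdges E) M) (ha : a ∈ M.verts) (hb : b ∈ M.verts)
    (hab : (N.deleteEdges E).Edge a b) : M.Edge a b :=
  ((h.cleanupInv hN hE).edge_iff a b).2 ⟨ha, hb, a, .refl, hab⟩

lemma isLeaf (hN : N.TreeChild) (hE : ∀ e ∈ E, N.IsReticEdge e)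
    (h : CleansTo (N.deleteEdges E) M) (hx : N.IsLeaf x) : M.IsLeaf x := by
  have hxE := not_incident_of_isLeaf hE hx
  have hxM := h.mem_verts_of_not_incident hN hE hx.1 hxE
  have hM := h.cleanupInv hN hE
  refine ⟨hxM, ?_, ?_⟩
  · rw [hM.indeg_eq hN hE hxM, indeg_deleteEdges_of_not_incident hxE, hx.2.1]
  · rw [hM.outdeg_eq hN hE hxM, outdeg_deleteEdges_of_not_incident hxE, hx.2.2]

/-- The parent of a cherry is a tree node with two leaf children, so no reticulation edge
touches it. -/
lemma cherry (hN : N.TreeChild) (hE : ∀ e ∈ E, N.IsReticEdge e)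
    (h : CleansTo (N.deleteEdges E) M) (hC : N.Cherry x y) : M.Cherry x y := by
  obtain ⟨hx, hy, hxy, p, hpx, hpy⟩ := hC
  have hp := (hN.1.mem_verts_of_edge hpx).1
  have hpE : ¬ Incident E p := by
    rintro ⟨e, he, rfl | rfl⟩
    · rcases eq_or_eq_of_outdeg_le_two (hN.1.outdeg_le_two hp) hpx hpy hxy (hE e he).1 with h | h
      · exact hx.not_isRetic (h ▸ (hE e he).2)
      · exact hy.not_isRetic (h ▸ (hE e he).2)
    · have := two_le_outdeg hpx hpy hxy
      have := (hE e he).2.2.2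
      omega
  have hpM := h.mem_verts_of_not_incident hN hE hp hpE
  have hx' := h.isLeaf hN hE hx
  have hy' := h.isLeaf hN hE hy
  exact ⟨hx', hy', hxy, p,
    h.edge_of_deleteEdges hN hE hpM hx'.1 (deleteEdges_edge_of_not_isRetic hE hpx hx.not_isRetic),
    h.edge_of_deleteEdges hN hE hpM hy'.1 (deleteEdges_edge_of_not_isRetic hE hpy hy.not_isRetic)⟩

/-- A cherry of the clean-up hangs from `py`, which survives; if it were not a cherry of `N`,
the contracted path from `py` to `x` would run through a removed child of `py` and end with
`px` removed, so both would be touched by `E`. -/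
lemma cherry_of_cherry (hN : N.TreeChild) (hE : ∀ e ∈ E, N.IsReticEdge e)
    (h : CleansTo (N.deleteEdges E) M) (hx : N.IsLeaf x) (hy : N.IsLeaf y)
    (hpx : N.Edge px x) (hpy : N.Edge py y) (hpyE : ¬ Incident E py)
    (hsep : Incident E px → ∀ d, N.Edge py d → ¬ Incident E d) (hC : M.Cherry x y) :
    N.Cherry x y := by
  obtain ⟨-, -, hxy, q, hqx, hqy⟩ := hC
  have hM := h.cleanupInv hN hE
  have hpyM := h.mem_verts_of_not_incident hN hE (hN.1.mem_verts_of_edge hpy).1 hpyE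
  obtain ⟨-, -, d, hqd, hdy⟩ := (hM.edge_iff q y).1 hqy
  rw [eq_of_indeg_le_one hy.2.1.le hdy.of_deleteEdges hpy] at hqd
  have hq : q = py := (eq_or_not_mem_of_intoRemoved hqd).resolve_right (not_not.2 hpyM)
  obtain ⟨-, -, d', hqd', hd'x⟩ := (hM.edge_iff q x).1 hqx
  rw [eq_of_indeg_le_one hx.2.1.le hd'x.of_deleteEdges hpx, hq] at hqd'
  rcases hqd'.cases_head with hpxy | ⟨d₁, hpyd₁, hd₁px⟩
  · exact ⟨hx, hy, hxy, py, hpxy ▸ hpx, hpy⟩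
  · have hpxM : px ∉ M.verts := by
      rcases eq_or_not_mem_of_intoRemoved hd₁px with rfl | h
      exacts [hpyd₁.2, h]
    have hpxN := (hN.1.mem_verts_of_edge hpx).1
    have hd₁N := (hN.1.mem_verts_of_edge hpyd₁.1.of_deleteEdges).2
    exact (hsep (h.incident_of_not_mem_verts hN hE hpxN hpxM) d₁ hpyd₁.1.of_deleteEdges
      (h.incident_of_not_mem_verts hN hE hd₁N hpyd₁.2)).elim

end CleansTo

end Cherry

section Blobs

variable {N : Net α} {S T X Y : Finset ℕ} {a b w ρ : ℕ}

lemma ConnectedIn.mono (hST : S ⊆ T) (h : N.ConnectedIn S a b) : N.ConnectedIn T a b :=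
  Relation.ReflTransGen.mono (fun _ _ h => ⟨hST h.1, hST h.2.1, h.2.2⟩) _ _ h

lemma ConnectedIn.symm (h : N.ConnectedIn S a b) : N.ConnectedIn S b a := by
  induction h with
  | refl => exact .refl
  | tail _ hst ih => exact ih.head ⟨hst.2.1, hst.1, hst.2.2.symm⟩

lemma connectedIn_union (hX : ∀ u ∈ X, ∀ v ∈ X, N.ConnectedIn X u v)
    (hY : ∀ u ∈ Y, ∀ v ∈ Y, N.ConnectedIn Y u v) (hwX : w ∈ X) (hwY : w ∈ Y) :
    ∀ u ∈ X ∪ Y, ∀ v ∈ X ∪ Y, N.ConnectedIn (X ∪ Y) u v := by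
  have key : ∀ z ∈ X ∪ Y, N.ConnectedIn (X ∪ Y) z w := by
    intro z hz
    rcases Finset.mem_union.1 hz with hz | hz
    · exact (hX z hz w hwX).mono Finset.subset_union_left
    · exact (hY z hz w hwY).mono Finset.subset_union_right
  exact fun u hu v hv => Relation.ReflTransGen.trans (key u hu) (key v hv).symm

lemma BiconnectedSet.connectedIn_erase (hS : N.BiconnectedSet S) (c : ℕ) :
    ∀ u ∈ S.erase c, ∀ v ∈ S.erase c, N.ConnectedIn (S.erase c) u v := by
  by_cases hc : c ∈ S
  · exact hS.2.2.2 c hc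
  · rw [Finset.erase_eq_of_notMem hc]
    exact hS.2.2.1

lemma BiconnectedSet.union (hS : N.BiconnectedSet S) (hT : N.BiconnectedSet T)
    (h : 1 < (S ∩ T).card) : N.BiconnectedSet (S ∪ T) := by
  obtain ⟨w, hw⟩ := Finset.card_pos.1 (by omega : 0 < (S ∩ T).card)
  rw [Finset.mem_inter] at hw
  refine ⟨hS.1.trans (Finset.card_le_card Finset.subset_union_left),
    Finset.union_subset hS.2.1 hT.2.1, connectedIn_union hS.2.2.1 hT.2.2.1 hw.1 hw.2,
    fun c _ => ?_⟩
  obtain ⟨w', hw', hne⟩ := Finset.exists_mem_ne h c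
  rw [Finset.mem_inter] at hw'
  rw [Finset.erase_union_distrib]
  exact connectedIn_union (hS.connectedIn_erase c) (hT.connectedIn_erase c)
    (Finset.mem_erase.2 ⟨hne, hw'.1⟩) (Finset.mem_erase.2 ⟨hne, hw'.2⟩)

lemma BlobSet.eq_of_mem_of_mem (hS : N.BlobSet S) (hT : N.BlobSet T) (hab : a ≠ b)
    (haS : a ∈ S) (hbS : b ∈ S) (haT : a ∈ T) (hbT : b ∈ T) : S = T := by
  have hST := hS.1.union hT.1 (Finset.one_lt_card.2
    ⟨a, Finset.mem_inter.2 ⟨haS, haT⟩, b, Finset.mem_inter.2 ⟨hbS, hbT⟩, hab⟩)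
  exact (hS.2 _ hST Finset.subset_union_left).trans (hT.2 _ hST Finset.subset_union_right).symm

/-- Otherwise removing the child of `ρ` would cut `ρ` off from the rest of `S`. -/
lemma IsNetwork.exists_parent_mem_of_isRetic (hN : N.IsNetwork) (hS : N.BiconnectedSet S)
    (hρS : ρ ∈ S) (hρ : N.IsRetic ρ) : ∃ t ∈ S, N.Edge t ρ := by
  obtain ⟨c, hρc⟩ := exists_child_of_outdeg_pos hρ.2.2.ge
  have hρ' : ρ ∈ S.erase c := Finset.mem_erase.2 ⟨hN.ne_of_edge hρc, hρS⟩
  have hcard : 1 < (S.erase c).card := by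
    have := hS.1
    have := Finset.pred_card_le_card_erase (s := S) (a := c)
    omega
  obtain ⟨u, hu, hne⟩ := Finset.exists_mem_ne hcard ρ
  rcases (hS.connectedIn_erase c ρ hρ' u hu).cases_head with
    rfl | ⟨z, ⟨-, hz, hρz | hzρ⟩, -⟩
  · exact absurd rfl hne
  · exact absurd (eq_of_outdeg_le_one hρ.2.2.le hρz hρc) (Finset.mem_erase.1 hz).1
  · exact ⟨z, Finset.mem_of_mem_erase hz, hzρ⟩

lemma exists_ne_isRetic_of_one_lt_reticCount (h : 1 < N.reticCount S) :
    ∃ ρ ∈ S, ∃ σ ∈ S, N.IsRetic ρ ∧ N.IsRetic σ ∧ ρ ≠ σ := by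
  obtain ⟨ρ, hρ, σ, hσ, hne⟩ := Finset.one_lt_card.1 h
  rw [Finset.mem_filter] at hρ hσ
  exact ⟨ρ, hρ.1, σ, hσ.1, hρ.2, hσ.2, hne⟩

end Blobs

section Construction

variable {N : Net α} {k : ℕ} {S : Finset ℕ} {d l w x y px py ρ σ τ : ℕ}

def SelfOrChild (N : Net α) (w ρ : ℕ) : Prop := ρ = w ∨ N.Edge w ρ

def AllReticsNear (N : Net α) (px py : ℕ) (S : Finset ℕ) : Prop :=
  ∀ ρ ∈ S, N.IsRetic ρ → N.SelfOrChild px ρ ∨ N.SelfOrChild py ρ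

namespace IsNetwork

lemma eq_of_selfOrChild (hN : N.IsNetwork) (hwl : N.Edge w l) (hl : N.IsLeaf l)
    (hρ : N.IsRetic ρ) (hσ : N.IsRetic σ) (h : N.SelfOrChild w ρ) (h' : N.SelfOrChild w σ) :
    ρ = σ := by
  rcases h with rfl | hwρ <;> rcases h' with rfl | hwσ
  · rfl
  · exact absurd (eq_of_outdeg_le_one hρ.2.2.le hwσ hwl ▸ hσ) hl.not_isRetic
  · exact absurd (eq_of_outdeg_le_one hσ.2.2.le hwρ hwl ▸ hρ) hl.not_isRetic
  · by_contra hne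
    rcases eq_or_eq_of_outdeg_le_two (hN.outdeg_le_two (hN.mem_verts_of_edge hwl).1)
      hwρ hwσ hne hwl with rfl | rfl
    exacts [hl.not_isRetic hρ, hl.not_isRetic hσ]

lemma not_selfOrChild_of_isTreeNode (hN : N.IsNetwork) (hwl : N.Edge w l) (hl : N.IsLeaf l)
    (hwd : N.Edge w d) (hd : N.IsTreeNode d) (hσ : N.IsRetic σ) : ¬ N.SelfOrChild w σ := by
  have hdl : d ≠ l := by
    rintro rfl
    have := hd.2.2
    have := hl.2.2
    omega
  rintro (rfl | hwσ)
  · have := two_le_outdeg hwd hwl hdl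
    have := hσ.2.2
    omega
  · rcases eq_or_eq_of_outdeg_le_two (hN.outdeg_le_two (hN.mem_verts_of_edge hwl).1)
      hwd hwl hdl hwσ with rfl | rfl
    exacts [hd.not_isRetic hσ, hl.not_isRetic hσ]

end IsNetwork

/-- Each of the two regions holds at most one reticulation. -/
lemma IsNetwork.exists_selfOrChild_of_allReticsNear (hN : N.IsNetwork) (hx : N.IsLeaf x)
    (hy : N.IsLeaf y) (hpx : N.Edge px x) (hpy : N.Edge py y) (h2 : 1 < N.reticCount S)
    (hS : N.AllReticsNear px py S) :
    ∃ ρ ∈ S, ∃ σ, N.IsRetic ρ ∧ N.IsRetic σ ∧ ρ ≠ σ ∧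
      N.SelfOrChild px ρ ∧ N.SelfOrChild py σ := by
  obtain ⟨ρ, hρS, σ, hσS, hρ, hσ, hne⟩ := exists_ne_isRetic_of_one_lt_reticCount h2
  rcases hS ρ hρS hρ with hρx | hρy <;> rcases hS σ hσS hσ with hσx | hσy
  · exact absurd (hN.eq_of_selfOrChild hpx hx hρ hσ hρx hσx) hne
  · exact ⟨ρ, hρS, σ, hρ, hσ, hne, hρx, hσy⟩
  · exact ⟨σ, hσS, ρ, hσ, hρ, hne.symm, hσx, hρy⟩
  · exact absurd (hN.eq_of_selfOrChild hpy hy hρ hσ hρy hσy) hne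

lemma IsNetwork.not_selfOrChild_and_selfOrChild (hN : N.IsNetwork) (hx : N.IsLeaf x)
    (hy : N.IsLeaf y) (hpx : N.Edge px x) (hpy : N.Edge py y) (h2 : 1 < N.reticCount S)
    (hS : N.AllReticsNear px py S) (hτ : N.IsRetic τ) :
    ¬ (N.SelfOrChild px τ ∧ N.SelfOrChild py τ) := by
  rintro ⟨hτx, hτy⟩
  obtain ⟨ρ, -, σ, hρ, hσ, hne, hρx, hσy⟩ :=
    hN.exists_selfOrChild_of_allReticsNear hx hy hpx hpy h2 hS
  exact hne ((hN.eq_of_selfOrChild hpx hx hρ hτ hρx hτx).trans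
    (hN.eq_of_selfOrChild hpy hy hσ hτ hσy hτy).symm)

/-- Prefer a reticulation edge of `S` far from `px` and `py`; failing that, take one into the
reticulation near `px`. -/
lemma IsNetwork.exists_reticEdge_choice (hN : N.IsNetwork) (hx : N.IsLeaf x) (hy : N.IsLeaf y)
    (hpx : N.Edge px x) (hpy : N.Edge py y) (hS : N.BiconnectedSet S)
    (h2 : 1 < N.reticCount S) :
    ∃ e, N.IsReticEdge e ∧ e.1 ∈ S ∧ e.2 ∈ S ∧
      ((¬ N.SelfOrChild px e.2 ∧ ¬ N.SelfOrChild py e.2) ∨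
        (N.AllReticsNear px py S ∧ N.SelfOrChild px e.2)) := by
  by_cases hall : N.AllReticsNear px py S
  · obtain ⟨ρ, hρS, -, hρ, -, -, hρx, -⟩ :=
      hN.exists_selfOrChild_of_allReticsNear hx hy hpx hpy h2 hall
    obtain ⟨t, htS, htρ⟩ := hN.exists_parent_mem_of_isRetic hS hρS hρ
    exact ⟨(t, ρ), ⟨htρ, hρ⟩, htS, hρS, Or.inr ⟨hall, hρx⟩⟩
  · simp only [AllReticsNear, not_forall, not_or] at hall
    obtain ⟨ρ, hρS, hρ, hρx, hρy⟩ := hall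
    obtain ⟨t, htS, htρ⟩ := hN.exists_parent_mem_of_isRetic hS hρS hρ
    exact ⟨(t, ρ), ⟨htρ, hρ⟩, htS, hρS, Or.inl ⟨hρx, hρy⟩⟩

lemma IsNetwork.exists_edges_per_blob (hN : N.IsNetwork) {P : Finset ℕ → ℕ × ℕ → Prop}
    (h : ∀ S, N.BlobSet S → N.reticCount S = k →
      ∃ e, N.IsReticEdge e ∧ e.1 ∈ S ∧ e.2 ∈ S ∧ P S e) :
    ∃ E : Finset (ℕ × ℕ),
      (∀ S, N.BlobSet S → N.reticCount S = k →
        ∃! e, e ∈ E ∧ e.1 ∈ S ∧ e.2 ∈ S) ∧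
      ∀ e ∈ E, ∃ S, N.BlobSet S ∧ N.reticCount S = k ∧
        N.IsReticEdge e ∧ e.1 ∈ S ∧ e.2 ∈ S ∧ P S e := by
  set B := N.verts.powerset.filter fun S => N.BlobSet S ∧ N.reticCount S = k
  have hB : ∀ {S}, S ∈ B ↔ N.BlobSet S ∧ N.reticCount S = k := fun {S} =>
    ⟨fun h => (Finset.mem_filter.1 h).2,
      fun h => Finset.mem_filter.2 ⟨Finset.mem_powerset.2 h.1.1.2.1, h⟩⟩
  have hchoice : ∀ S, ∃ e, S ∈ B →
      N.IsReticEdge e ∧ e.1 ∈ S ∧ e.2 ∈ S ∧ P S e := by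
    intro S
    by_cases hS : S ∈ B
    · obtain ⟨e, he⟩ := h S (hB.1 hS).1 (hB.1 hS).2
      exact ⟨e, fun _ => he⟩
    · exact ⟨(0, 0), fun h => absurd h hS⟩
  choose f hf using hchoice
  refine ⟨B.image f, fun S hS hkS => ?_, fun e he => ?_⟩
  · have hSB := hB.2 ⟨hS, hkS⟩
    refine ⟨f S, ⟨Finset.mem_image_of_mem f hSB, (hf S hSB).2.1, (hf S hSB).2.2.1⟩, ?_⟩
    rintro _ ⟨he, he1, he2⟩
    obtain ⟨T, hT, rfl⟩ := Finset.mem_image.1 he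
    obtain ⟨hTr, hT1, hT2, -⟩ := hf T hT
    rw [(hB.1 hT).1.eq_of_mem_of_mem hS (hN.ne_of_edge hTr.1) hT1 hT2 he1 he2]
  · obtain ⟨T, hT, rfl⟩ := Finset.mem_image.1 he
    exact ⟨T, (hB.1 hT).1, (hB.1 hT).2, hf T hT⟩

/-- The reticulation edges chosen by `exists_reticEdge_choice`, one per level-`k` blob, never
touch `py`, and if one touches `px` then its blob has a reticulation near `py`, which rules out
touching a child of `py`. -/
theorem TreeChild.exists_mllsEdges_avoiding (hN : N.TreeChild) (hk : 2 ≤ k) (hx : N.IsLeaf x)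
    (hy : N.IsLeaf y) (hpx : N.Edge px x) (hpy : N.Edge py y) :
    ∃ E : Finset (ℕ × ℕ), (∀ e ∈ E, N.IsReticEdge e) ∧
      (∀ S, N.BlobSet S → N.reticCount S = k →
        ∃! e, e ∈ E ∧ e.1 ∈ S ∧ e.2 ∈ S) ∧
      (∀ e ∈ E, ∃ S, N.BlobSet S ∧ N.reticCount S = k ∧ e.1 ∈ S ∧ e.2 ∈ S) ∧
      ¬ Incident E py ∧ (Incident E px → ∀ d, N.Edge py d → ¬ Incident E d) := by
  obtain ⟨E, huniq, hE⟩ := hN.1.exists_edges_per_blob (k := k)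
    (P := fun S e => (¬ N.SelfOrChild px e.2 ∧ ¬ N.SelfOrChild py e.2) ∨
      (N.AllReticsNear px py S ∧ N.SelfOrChild px e.2))
    fun S hS hkS => hN.1.exists_reticEdge_choice hx hy hpx hpy hS.1 (by omega)
  have hnear : ∀ {e : ℕ × ℕ} {w}, N.IsReticEdge e → (e.1 = w ∨ e.2 = w) →
      N.SelfOrChild w e.2 :=
    fun he h => h.elim (fun h => Or.inr (h ▸ he.1)) Or.inl
  refine ⟨E, fun e he => ?_, huniq, fun e he => ?_, ?_, ?_⟩
  · obtain ⟨S, -, -, hre, -⟩ := hE e he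
    exact hre
  · obtain ⟨S, hS, hkS, -, h1, h2, -⟩ := hE e he
    exact ⟨S, hS, hkS, h1, h2⟩
  · rintro ⟨e, he, hpye⟩
    obtain ⟨S, -, hkS, hre, -, -, hP⟩ := hE e he
    rcases hP with ⟨-, h⟩ | ⟨hall, hex⟩
    · exact h (hnear hre hpye)
    · exact hN.1.not_selfOrChild_and_selfOrChild hx hy hpx hpy (by omega) hall hre.2
        ⟨hex, hnear hre hpye⟩
  · rintro ⟨e, he, hpxe⟩ d hpyd ⟨e', he', hde'⟩
    obtain ⟨S, -, hkS, hre, -, -, hP⟩ := hE e he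
    obtain ⟨T, -, -, hre', -, -, hP'⟩ := hE e' he'
    have hall : N.AllReticsNear px py S := (hP.resolve_left fun h => h.1 (hnear hre hpxe)).1
    obtain ⟨-, -, σ, -, hσ, -, -, hσy⟩ :=
      hN.1.exists_selfOrChild_of_allReticsNear hx hy hpx hpy (by omega) hall
    rcases hde' with h | h
    · have hd := hN.isTreeNode_of_edge_isRetic (h ▸ (show N.Edge e'.1 e'.2 from hre'.1)) hre'.2
      exact hN.1.not_selfOrChild_of_isTreeNode hpy hy hpyd hd hσ hσy
    · have hdy : N.SelfOrChild py e'.2 := Or.inr (h ▸ hpyd)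
      rcases hP' with ⟨-, h'⟩ | ⟨-, hdx⟩
      · exact h' hdy
      · exact hN.1.not_selfOrChild_and_selfOrChild hx hy hpx hpy (by omega) hall hre'.2
          ⟨hdx, hdy⟩

end Construction

end Net

theorem cherry_iff_all_MLLS_cherry_general {X : Type} (N : Net X) (hN : N.TreeChild)
    (k : ℕ) (hk : 2 ≤ k)
    (x y : ℕ) (hx : N.IsLeaf x) (hy : N.IsLeaf y) :
    N.Cherry x y ↔ ∀ M, N.IsMLLS k M → M.Cherry x y := by
  refine ⟨fun hC M ⟨E, hvalid, _, _, hM⟩ => hM.cherry hN (fun e he => (hvalid e he).1) hC,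
    fun H => ?_⟩
  obtain ⟨px, hpx⟩ := Net.exists_parent_of_indeg_pos hx.2.1.ge
  obtain ⟨py, hpy⟩ := Net.exists_parent_of_indeg_pos hy.2.1.ge
  obtain ⟨E, hE, huniq, hblob, hpyE, hsep⟩ := hN.exists_mllsEdges_avoiding hk hx hy hpx hpy
  obtain ⟨M, hM⟩ := hN.exists_cleansTo hE
  exact hM.cherry_of_cherry hN hE hx hy hpx hpy hpyE hsep
    (H M ⟨E, fun e he => hN.validEdge (hE e he), huniq, hblob, hM⟩)

/-- For a level-`k` (`k ≥ 2`) binary tree-child network `N` and leaves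
`x, y`: `N` contains the cherry on `{x,y}` iff every MLLS of `N` contains it. -/
theorem cherry_iff_all_MLLS_cherry {X : Type} (N : Net X) (hN : N.TreeChild)
    (k : ℕ) (hk : 2 ≤ k) (hl : N.IsLevel k)
    (x y : ℕ) (hx : N.IsLeaf x) (hy : N.IsLeaf y) :
    N.Cherry x y ↔ ∀ M, N.IsMLLS k M → M.Cherry x y :=
  cherry_iff_all_MLLS_cherry_general N hN k hk x y hx hy
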